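/- arXiv:1703.07804 — 4 statements merged into one kernel-verified Lean document; each statement's English description precedes it below -/
import Mathlib

section
/- For an Erdős–Rényi random graph on n vertices with edge probability p, the second matrix moment of the Laplacian satisfies 𝔼[L²] = ((n-2)p² + 2p)(nI - J). -/
/-!
Writing `L = D - A` with `D` the diagonal degree matrix, each entry of `L²` is a quadratic
polynomial in the entries of `A`. Independence of the edges gives
`𝔼[A a b * A c d] = 0` if `a = b` or `c = d`, `p` if `{a, b} = {c, d}` and `p²` otherwise,
so `𝔼[(L²) i j]` is a count of index patterns of these three kinds.
-/

open Matrix MeasureTheory ProbabilityTheory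

structure IsErdosRenyi {Ω V : Type*} [MeasureSpace Ω] [LinearOrder V]
    (p : ℝ) (A : Ω → Matrix V V ℝ) : Prop where
  measurable : ∀ i j, Measurable fun ω => A ω i j
  symm : ∀ ω i j, A ω i j = A ω j i
  diag : ∀ ω i, A ω i i = 0
  zero_or_one : ∀ ω i j, A ω i j = 0 ∨ A ω i j = 1
  prob_eq_one : ∀ i j, i ≠ j → (ℙ : Measure Ω) {ω | A ω i j = 1} = ENNReal.ofReal p
  iIndepFun : iIndepFun (fun (e : {e : V × V // e.1 < e.2}) ω => A ω e.1.1 e.1.2) ℙ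

section Counting

variable {α R : Type*} [Fintype α] [DecidableEq α] [CommRing R]

lemma Fintype.sum_ite_eq_const (x : α) (u w : R) :
    ∑ l, (if l = x then u else w) = u + (Fintype.card α - 1) * w := by
  have h : ∀ l, (if l = x then u else w) = w + if l = x then u - w else 0 := by
    intro l; split_ifs <;> ring
  simp only [h, Finset.sum_add_distrib, Finset.sum_ite_eq', Finset.mem_univ, if_true,
    Finset.sum_const, Finset.card_univ, nsmul_eq_mul]
  ring

lemma Fintype.sum_ite_eq_ite_eq_const {x y : α} (hxy : x ≠ y) (u v w : R) :
    ∑ l, (if l = x then u else if l = y then v else w) = u + v + (Fintype.card α - 2) * w := by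
  have h : ∀ l, (if l = x then u else if l = y then v else w) =
      (if l = x then u - w else 0) + if l = y then v else w := by
    intro l; by_cases hx : l = x
    · subst hx; simp [hxy]
    · simp [hx]
  simp only [h, Finset.sum_add_distrib, Finset.sum_ite_eq', Finset.mem_univ, if_true,
    Fintype.sum_ite_eq_const]
  ring

end Counting

lemma apply_eq_apply_inf_sup {V α : Type*} [LinearOrder V] {M : Matrix V V α}
    (hM : ∀ i j, M i j = M j i) (a b : V) : M a b = M (a ⊓ b) (a ⊔ b) := by
  rcases le_total a b with h | h
  · simp [h]
  · simp [h, hM a b]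

section Moments

variable {Ω V : Type*} [MeasureSpace Ω] {p : ℝ} {A : Ω → Matrix V V ℝ}

lemma integrable_entry_mul_entry [IsFiniteMeasure (ℙ : Measure Ω)]
    (hmeas : ∀ i j, Measurable fun ω => A ω i j)
    (h01 : ∀ ω i j, A ω i j = 0 ∨ A ω i j = 1) (a b c d : V) :
    Integrable (fun ω => A ω a b * A ω c d) ℙ := by
  refine Integrable.mono' (integrable_const 1)
    ((hmeas a b).mul (hmeas c d)).aestronglyMeasurable (ae_of_all _ fun ω => ?_)
  rcases h01 ω a b with h | h <;> rcases h01 ω c d with h' | h' <;> simp [h, h']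

lemma integral_entry (hp : 0 ≤ p) (hmeas : ∀ i j, Measurable fun ω => A ω i j)
    (h01 : ∀ ω i j, A ω i j = 0 ∨ A ω i j = 1)
    (hprob : ∀ i j, i ≠ j → (ℙ : Measure Ω) {ω | A ω i j = 1} = ENNReal.ofReal p)
    {a b : V} (hab : a ≠ b) : ∫ ω, A ω a b = p := by
  have hs : MeasurableSet {ω | A ω a b = 1} := hmeas a b (measurableSet_singleton 1)
  have hind : (fun ω => A ω a b) = {ω | A ω a b = 1}.indicator 1 := by
    funext ω
    rcases h01 ω a b with h | h <;> simp [Set.indicator, h]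
  rw [hind, integral_indicator_one hs, measureReal_def, hprob a b hab, ENNReal.toReal_ofReal hp]

variable [LinearOrder V]

lemma indepFun_entry (hA : IsErdosRenyi p A) {a b c d : V} (hab : a ≠ b) (hcd : c ≠ d)
    (hne : s(a, b) ≠ s(c, d)) : IndepFun (fun ω => A ω a b) (fun ω => A ω c d) ℙ := by
  have hne' : (⟨(a ⊓ b, a ⊔ b), inf_lt_sup.2 hab⟩ : {e : V × V // e.1 < e.2}) ≠
      ⟨(c ⊓ d, c ⊔ d), inf_lt_sup.2 hcd⟩ := by
    intro h
    simp only [Subtype.mk.injEq, Prod.mk.injEq] at h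
    exact hne (Sym2.inf_eq_inf_and_sup_eq_sup.1 (by simpa using h))
  have hsort : ∀ ω x y, A ω (x ⊓ y) (x ⊔ y) = A ω x y :=
    fun ω x y => (apply_eq_apply_inf_sup (hA.symm ω) x y).symm
  simpa only [hsort] using hA.iIndepFun.indepFun hne'

def erMoment (p : ℝ) (a b c d : V) : ℝ :=
  if a = b ∨ c = d then 0 else if s(a, b) = s(c, d) then p else p ^ 2

lemma integral_entry_mul_entry (hA : IsErdosRenyi p A) (hp : 0 ≤ p) (a b c d : V) :
    ∫ ω, A ω a b * A ω c d = erMoment p a b c d := by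
  unfold erMoment
  split_ifs with hdiag hsame
  · rcases hdiag with h | h <;> simp [h, hA.diag]
  · rw [not_or] at hdiag
    have hcd : ∀ ω, A ω c d = A ω a b := by
      intro ω
      rcases Sym2.eq_iff.1 hsame with ⟨hac, hbd⟩ | ⟨had, hbc⟩
      · rw [hac, hbd]
      · rw [had, hbc, hA.symm]
    have hsq : ∀ ω, A ω a b * A ω a b = A ω a b := fun ω => by
      rcases hA.zero_or_one ω a b with h | h <;> simp [h]
    simp only [hcd, hsq]
    exact integral_entry hp hA.measurable hA.zero_or_one hA.prob_eq_one hdiag.1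
  · rw [not_or] at hdiag
    rw [(indepFun_entry hA hdiag.1 hdiag.2 hsame).integral_fun_mul_eq_mul_integral
      (hA.measurable a b).aestronglyMeasurable (hA.measurable c d).aestronglyMeasurable,
      integral_entry hp hA.measurable hA.zero_or_one hA.prob_eq_one hdiag.1,
      integral_entry hp hA.measurable hA.zero_or_one hA.prob_eq_one hdiag.2, sq]

lemma erMoment_comm (a b c d : V) : erMoment p a b c d = erMoment p c d a b := by
  simp only [erMoment, or_comm, eq_comm]

lemma erMoment_swap (a b c d : V) : erMoment p a b c d = erMoment p a b d c := by
  simp only [erMoment, Sym2.eq_swap, eq_comm]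

variable [Fintype V]

lemma sum_erMoment_left (i j : V) :
    ∑ k, erMoment p i k i j = if i = j then 0 else p + (Fintype.card V - 2) * p ^ 2 := by
  split_ifs with hij
  · simp [erMoment, hij]
  calc ∑ k, erMoment p i k i j = ∑ k, if k = i then 0 else if k = j then p else p ^ 2 :=
        Finset.sum_congr rfl fun k _ => by
          rcases eq_or_ne k i with rfl | hki
          · simp [erMoment]
          · simp [erMoment, hki, hij, hki.symm]
    _ = _ := by rw [Fintype.sum_ite_eq_ite_eq_const hij]; ring

lemma sum_erMoment_path (i j : V) :
    ∑ k, erMoment p i k k j =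
      if i = j then (Fintype.card V - 1) * p else (Fintype.card V - 2) * p ^ 2 := by
  split_ifs with hij
  · subst hij
    calc ∑ k, erMoment p i k k i = ∑ k, if k = i then 0 else p :=
          Finset.sum_congr rfl fun k _ => by
            rcases eq_or_ne k i with rfl | hki
            · simp [erMoment]
            · simp [erMoment, hki, hki.symm, Sym2.eq_swap]
      _ = _ := by rw [Fintype.sum_ite_eq_const]; ring
  calc ∑ k, erMoment p i k k j = ∑ k, if k = i then 0 else if k = j then 0 else p ^ 2 :=
        Finset.sum_congr rfl fun k _ => by
          rcases eq_or_ne k i with rfl | hki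
          · simp [erMoment]
          rcases eq_or_ne k j with rfl | hkj
          · simp [erMoment]
          · simp [erMoment, hki, hkj, hij, hki.symm]
    _ = _ := by rw [Fintype.sum_ite_eq_ite_eq_const hij]; ring

lemma sum_sum_erMoment (i : V) :
    ∑ k, ∑ l, erMoment p i k i l =
      (Fintype.card V - 1) * (p + (Fintype.card V - 2) * p ^ 2) := by
  rw [Finset.sum_comm]
  simp only [sum_erMoment_left, eq_comm (a := i)]
  rw [Fintype.sum_ite_eq_const, zero_add]

end Moments

lemma sq_diagonal_sum_sub_apply {V R : Type*} [Fintype V] [DecidableEq V] [CommRing R]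
    (M : Matrix V V R) (i j : V) :
    ((diagonal (fun i => ∑ k, M i k) - M) ^ 2) i j =
      (1 : Matrix V V R) i j * ∑ k, ∑ l, M i k * M i l - ∑ k, M i k * M i j
        - ∑ k, M i j * M j k + ∑ k, M i k * M k j := by
  have hDD : (diagonal (fun i => ∑ k, M i k) * diagonal fun i => ∑ k, M i k) i j =
      (1 : Matrix V V R) i j * ∑ k, ∑ l, M i k * M i l := by
    rw [diagonal_mul_diagonal, diagonal_apply, one_apply, Finset.sum_mul_sum]
    split_ifs <;> simp
  rw [sq, sub_mul, mul_sub, mul_sub, Matrix.sub_apply, Matrix.sub_apply, Matrix.sub_apply, hDD,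
    diagonal_mul, mul_diagonal, Finset.sum_mul, Finset.mul_sum _ _ (M i j), mul_apply]
  ring

section Laplacian

variable {Ω V : Type*} [MeasureSpace Ω] [IsProbabilityMeasure (ℙ : Measure Ω)] [LinearOrder V]
  [Fintype V] {p : ℝ} {A : Ω → Matrix V V ℝ}

lemma integral_sq_laplacian_apply_eq_sum (hA : IsErdosRenyi p A) (hp : 0 ≤ p) (i j : V) :
    ∫ ω, ((diagonal (fun i => ∑ k, A ω i k) - A ω) ^ 2) i j =
      (1 : Matrix V V ℝ) i j * ∑ k, ∑ l, erMoment p i k i l - ∑ k, erMoment p i k i j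
        - ∑ k, erMoment p i j j k + ∑ k, erMoment p i k k j := by
  have hI := integrable_entry_mul_entry hA.measurable hA.zero_or_one
  simp_rw [sq_diagonal_sum_sub_apply]
  rw [integral_add, integral_sub, integral_sub, integral_const_mul]
  · simp only [integral_finsetSum _ fun k _ => integrable_finsetSum _ fun l _ => hI _ _ _ _]
    simp only [integral_finsetSum _ fun k _ => hI _ _ _ _, integral_entry_mul_entry hA hp]
  all_goals fun_prop (disch := exact hI _ _ _ _)

lemma integral_sq_laplacian_apply (hA : IsErdosRenyi p A) (hp : 0 ≤ p) (i j : V) :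
    ∫ ω, ((diagonal (fun i => ∑ k, A ω i k) - A ω) ^ 2) i j =
      ((Fintype.card V - 2) * p ^ 2 + 2 * p) * (Fintype.card V * (1 : Matrix V V ℝ) i j - 1) := by
  have hmid : ∑ k, erMoment p i j j k = ∑ k, erMoment p j k j i :=
    Finset.sum_congr rfl fun k _ => by rw [erMoment_comm, erMoment_swap]
  rw [integral_sq_laplacian_apply_eq_sum hA hp, hmid, sum_sum_erMoment, sum_erMoment_left,
    sum_erMoment_left, sum_erMoment_path]
  rcases eq_or_ne i j with rfl | hij
  · simp only [one_apply_eq, if_true]; ring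
  · simp only [one_apply_ne hij, hij, hij.symm, if_false]; ring

end Laplacian

/-- Second matrix moment of the Erdős–Rényi Laplacian: `𝔼[L²] = ((n-2)p² + 2p)(n I - J)`. -/
theorem stmt3 (n : ℕ) (p : ℝ) (hp : p ∈ Set.Ioo (0 : ℝ) 1)
    {Ω : Type*} [MeasureSpace Ω] [IsProbabilityMeasure (ℙ : Measure Ω)]
    (A : Ω → Matrix (Fin n) (Fin n) ℝ)
    (hmeas : ∀ i j, Measurable fun ω => A ω i j)
    (hsymm : ∀ ω i j, A ω i j = A ω j i)
    (hdiag : ∀ ω i, A ω i i = 0)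
    (h01 : ∀ ω i j, A ω i j = 0 ∨ A ω i j = 1)
    (hbern : ∀ i j, i ≠ j → (ℙ : Measure Ω) {ω | A ω i j = 1} = ENNReal.ofReal p)
    (hindep : iIndepFun
      (fun (e : {e : Fin n × Fin n // e.1 < e.2}) ω => A ω e.1.1 e.1.2) ℙ)
    (L : Ω → Matrix (Fin n) (Fin n) ℝ)
    (hL : ∀ ω, L ω = Matrix.diagonal (fun i => ∑ j, A ω i j) - A ω) :
    ∀ i j, ∫ ω, (L ω ^ 2) i j =
      ((((n : ℝ) - 2) * p ^ 2 + 2 * p) •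
        ((n : ℝ) • (1 : Matrix (Fin n) (Fin n) ℝ) - Matrix.of fun _ _ => (1 : ℝ))
        : Matrix (Fin n) (Fin n) ℝ) i j := by
  intro i j
  have hA : IsErdosRenyi p A := ⟨hmeas, hsymm, hdiag, h01, hbern, hindep⟩
  simp only [hL, integral_sq_laplacian_apply hA hp.1.le, Fintype.card_fin, Matrix.smul_apply,
    Matrix.sub_apply, of_apply, smul_eq_mul]
end

section
/- For an Erdős–Rényi random graph on n vertices with edge probability p, the third matrix moment of the Laplacian satisfies 𝔼[L³] = ((n-2)(n-4)p³ + 6(n-2)p² + 4p)(nI - J). -/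
open Matrix MeasureTheory ProbabilityTheory Finset

/-!
Write `L = ∑ₑ Aₑ Lₑ` over the edges `e = {u, v}` of the complete graph, where
`Lₑ = (δᵤ - δᵥ)(δᵤ - δᵥ)ᵀ`. The `Aₑ` are independent and `{0,1}`-valued with mean `p`, so
`𝔼[Aₑ A_f A_g] = p ^ #{e, f, g} = p³ + (p² - p³)(δ_ef + δ_eg + δ_fg) + (p - 3p² + 2p³) δ_efg`.
Hence `𝔼[L³]` is a combination of `K³`, `∑ₑ Lₑ² K`, `∑ₑ Lₑ K Lₑ`, `K ∑ₑ Lₑ²` and `∑ₑ Lₑ³`, where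
`K = ∑ₑ Lₑ = nI - J`, and the relations `Lₑ² = 2 Lₑ` and `K Lₑ = n Lₑ` reduce each of them to a
multiple of `K`.
-/

lemma sum_sum_eq_two_nsmul_sum_lt {V M : Type*} [Fintype V] [LinearOrder V] [AddCommMonoid M]
    (f : V → V → M) (hsymm : ∀ u v, f u v = f v u) (hdiag : ∀ u, f u u = 0) :
    ∑ u, ∑ v, f u v = 2 • ∑ e : {e : V × V // e.1 < e.2}, f e.1.1 e.1.2 := by
  have hsplit : ∀ u v, f u v = (if u < v then f u v else 0) + (if v < u then f v u else 0) := by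
    intro u v
    rcases lt_trichotomy u v with h | rfl | h
    · simp [h, h.not_gt]
    · simp [hdiag]
    · simp [h, h.not_gt, hsymm u v]
  rw [← sum_subtype (univ.filter fun e : V × V => e.1 < e.2) (by simp) (fun e => f e.1 e.2),
    sum_filter, Fintype.sum_prod_type, two_nsmul]
  conv_lhs => enter [2, u, 2, v]; rw [hsplit u v]
  rw [sum_congr rfl fun u _ => sum_add_distrib, sum_add_distrib,
    sum_comm (f := fun u v => if v < u then f v u else 0)]

lemma mul_prod_eq_prod_insert {α M : Type*} [DecidableEq α] [CommMonoid M] {v : α → M}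
    (hv : ∀ a, IsIdempotentElem (v a)) (a : α) (s : Finset α) :
    v a * ∏ x ∈ s, v x = ∏ x ∈ insert a s, v x := by
  by_cases ha : a ∈ s
  · rw [insert_eq_of_mem ha, ← mul_prod_erase s v ha, ← mul_assoc, (hv a).eq]
  · rw [prod_insert ha]

lemma pow_card_triple {α R : Type*} [DecidableEq α] [CommRing R] (p : R) (e f g : α) :
    p ^ #{e, f, g} = p ^ 3 + (p ^ 2 - p ^ 3) *
      ((if e = f then 1 else 0) + (if e = g then 1 else 0) + (if f = g then 1 else 0)) +
      (p - 3 * p ^ 2 + 2 * p ^ 3) * (if e = f ∧ f = g then 1 else 0) := by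
  by_cases hef : e = f <;> by_cases heg : e = g <;> by_cases hfg : f = g <;>
    (simp_all; try ring)

lemma sum_triple_smul_mul {ι R S : Type*} [Fintype ι] [DecidableEq ι] [CommSemiring R]
    [Semiring S] [Algebra R S] (M : ι → S) {a b d c m : R}
    (hsq : ∀ e, M e * M e = c • M e) (hK : ∀ e, (∑ f, M f) * M e = m • M e) :
    ∑ e, ∑ f, ∑ g, (a + b * ((if e = f then 1 else 0) + (if e = g then 1 else 0) +
        (if f = g then 1 else 0)) + d * (if e = f ∧ f = g then 1 else 0)) • (M e * M f * M g)
      = (a * m ^ 2 + 3 * b * c * m + d * c ^ 2) • ∑ e, M e := by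
  have hKK : (∑ e, M e) * (∑ e, M e) = m • ∑ e, M e := by
    rw [mul_sum, sum_congr rfl fun e _ => hK e, ← smul_sum]
  have hS : ∑ e, M e * M e = c • ∑ e, M e := by
    rw [sum_congr rfl fun e _ => hsq e, ← smul_sum]
  have hall : ∑ e, ∑ f, ∑ g, M e * M f * M g = m ^ 2 • ∑ e, M e := by
    simp only [← mul_sum, ← sum_mul, hKK, smul_mul_assoc, smul_smul, sq]
  have hef : ∑ e, ∑ f, ∑ g, (if e = f then (1 : R) else 0) • (M e * M f * M g)
      = (c * m) • ∑ e, M e := by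
    simp [ite_smul, ← mul_sum, ← sum_mul, hS, hKK, smul_smul]
  have heg : ∑ e, ∑ f, ∑ g, (if e = g then (1 : R) else 0) • (M e * M f * M g)
      = (c * m) • ∑ e, M e := by
    simp [ite_smul, ← mul_sum, ← sum_mul, mul_assoc, hK, hsq, smul_smul, ← smul_sum, mul_comm m c]
  have hfg : ∑ e, ∑ f, ∑ g, (if f = g then (1 : R) else 0) • (M e * M f * M g)
      = (c * m) • ∑ e, M e := by
    simp only [mul_assoc, ite_smul, one_smul, zero_smul, sum_ite_eq, mem_univ, if_true, ← mul_sum,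
      hS, mul_smul_comm]
    rw [← smul_sum, ← sum_mul, hKK, smul_smul]
  have hdiag : ∑ e, ∑ f, ∑ g, (if e = f ∧ f = g then (1 : R) else 0) • (M e * M f * M g)
      = c ^ 2 • ∑ e, M e := by
    simp [ite_smul, ite_and, hsq, smul_smul, sq, ← smul_sum]
  calc _ = a • (∑ e, ∑ f, ∑ g, M e * M f * M g)
        + b • ((∑ e, ∑ f, ∑ g, (if e = f then (1 : R) else 0) • (M e * M f * M g))
          + (∑ e, ∑ f, ∑ g, (if e = g then (1 : R) else 0) • (M e * M f * M g))
          + (∑ e, ∑ f, ∑ g, (if f = g then (1 : R) else 0) • (M e * M f * M g)))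
        + d • ∑ e, ∑ f, ∑ g, (if e = f ∧ f = g then (1 : R) else 0) • (M e * M f * M g) := by
        simp only [add_smul, mul_smul, smul_add, sum_add_distrib, smul_sum]
    _ = _ := by
      rw [hall, hef, heg, hfg, hdiag]
      module

section EdgeLaplacian

variable {V R : Type*} [DecidableEq V]

section CommRing

variable [CommRing R]

def edgeVec (u v : V) : V → R := Pi.single u 1 - Pi.single v 1

def edgeLaplacian (u v : V) : Matrix V V R := vecMulVec (edgeVec u v) (edgeVec u v)

lemma edgeVec_dotProduct_self [Fintype V] {u v : V} (huv : u ≠ v) :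
    edgeVec u v ⬝ᵥ edgeVec u v = (2 : R) := by
  norm_num [edgeVec, dotProduct, mul_sub, Pi.single_apply, huv, huv.symm, sum_sub_distrib]

lemma sum_edgeVec [Fintype V] (u v : V) : ∑ i, edgeVec u v i = (0 : R) := by
  simp [edgeVec, sum_sub_distrib]

lemma edgeLaplacian_self (u : V) : edgeLaplacian u u = (0 : Matrix V V R) := by
  simp [edgeLaplacian, edgeVec]

lemma edgeLaplacian_comm (u v : V) :
    edgeLaplacian u v = (edgeLaplacian v u : Matrix V V R) := by
  rw [edgeLaplacian, edgeLaplacian, edgeVec, edgeVec, ← neg_sub, vecMulVec_neg, neg_vecMulVec,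
    neg_neg]

lemma edgeLaplacian_mul_self [Fintype V] {u v : V} (huv : u ≠ v) :
    edgeLaplacian u v * edgeLaplacian u v = (2 : R) • (edgeLaplacian u v : Matrix V V R) := by
  rw [edgeLaplacian, vecMulVec_mul_vecMulVec, edgeVec_dotProduct_self huv, vecMulVec_smul]

lemma ones_mul_edgeLaplacian [Fintype V] (u v : V) :
    (of fun _ _ => 1 : Matrix V V R) * edgeLaplacian u v = 0 := by
  have h : (of fun _ _ => 1 : Matrix V V R) *ᵥ edgeVec u v = 0 := by
    ext i
    simp [mulVec, dotProduct, sum_edgeVec]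
  rw [edgeLaplacian, mul_vecMulVec, h, zero_vecMulVec]

lemma sum_sum_smul_edgeLaplacian [Fintype V] (M : Matrix V V R) (hM : ∀ i j, M i j = M j i) :
    ∑ u, ∑ v, M u v • edgeLaplacian u v = (2 : R) • (diagonal (fun i => ∑ j, M i j) - M) := by
  ext i j
  simp only [Matrix.sum_apply, Matrix.smul_apply, edgeLaplacian, vecMulVec_apply, edgeVec,
    Pi.sub_apply, Pi.single_apply, smul_eq_mul, mul_sub, sum_sub_distrib, mul_ite, mul_one,
    mul_zero, sum_ite_irrel, sum_const_zero, sum_ite_eq, mem_univ, if_true, Matrix.sub_apply, diagonal_apply]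
  split_ifs with hij
  · subst hij; simp only [hM _ i]; ring
  · rw [hM j i]; ring

end CommRing

variable [Fintype V] [LinearOrder V] [Field R] [CharZero R]

lemma diagonal_sub_eq_sum_smul_edgeLaplacian (M : Matrix V V R) (hM : ∀ i j, M i j = M j i) :
    diagonal (fun i => ∑ j, M i j) - M
      = ∑ e : {e : V × V // e.1 < e.2}, M e.1.1 e.1.2 • edgeLaplacian e.1.1 e.1.2 := by
  have h := sum_sum_eq_two_nsmul_sum_lt (fun u v => M u v • (edgeLaplacian u v : Matrix V V R))
    (fun u v => by rw [hM, edgeLaplacian_comm]) (fun u => by rw [edgeLaplacian_self, smul_zero])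
  rw [sum_sum_smul_edgeLaplacian M hM, two_nsmul, ← two_smul R] at h
  exact smul_right_injective _ two_ne_zero h

lemma sum_edgeLaplacian :
    ∑ e : {e : V × V // e.1 < e.2}, edgeLaplacian e.1.1 e.1.2
      = (Fintype.card V : R) • (1 : Matrix V V R) - of fun _ _ => 1 := by
  simpa [smul_one_eq_diagonal] using
    (diagonal_sub_eq_sum_smul_edgeLaplacian (of fun _ _ => 1 : Matrix V V R) fun _ _ => rfl).symm

lemma sum_pow_card_smul_edgeLaplacian_mul (p : R) :
    ∑ e : {e : V × V // e.1 < e.2}, ∑ f : {e : V × V // e.1 < e.2},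
      ∑ g : {e : V × V // e.1 < e.2}, p ^ #{e, f, g} •
        (edgeLaplacian e.1.1 e.1.2 * edgeLaplacian f.1.1 f.1.2 * edgeLaplacian g.1.1 g.1.2)
      = (((Fintype.card V : R) - 2) * ((Fintype.card V : R) - 4) * p ^ 3
          + 6 * ((Fintype.card V : R) - 2) * p ^ 2 + 4 * p) •
        ((Fintype.card V : R) • (1 : Matrix V V R) - of fun _ _ => 1) := by
  have hK : ∀ e : {e : V × V // e.1 < e.2},
      (∑ f : {e : V × V // e.1 < e.2}, edgeLaplacian f.1.1 f.1.2) * edgeLaplacian e.1.1 e.1.2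
        = (Fintype.card V : R) • (edgeLaplacian e.1.1 e.1.2 : Matrix V V R) := fun e => by
    rw [sum_edgeLaplacian, sub_mul, ones_mul_edgeLaplacian, sub_zero, smul_mul_assoc, one_mul]
  simp_rw [pow_card_triple p]
  rw [sum_triple_smul_mul _ (fun e => edgeLaplacian_mul_self e.2.ne) hK, sum_edgeLaplacian]
  congr 1
  ring

end EdgeLaplacian

section Moments

variable {Ω ι : Type*} {mΩ : MeasurableSpace Ω} {μ : Measure Ω} {p : ℝ}

lemma integral_eq_of_zero_or_one {Y : Ω → ℝ}
    (hY : Measurable Y) (h01 : ∀ ω, Y ω = 0 ∨ Y ω = 1) (hp : 0 ≤ p)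
    (hprob : μ {ω | Y ω = 1} = ENNReal.ofReal p) :
    ∫ ω, Y ω ∂μ = p := by
  have hind : Y = Set.indicator {ω | Y ω = 1} (fun _ => (1 : ℝ)) := by
    funext ω
    rcases h01 ω with h | h <;> simp [h]
  have hs : MeasurableSet {ω | Y ω = 1} := hY (measurableSet_singleton 1)
  rw [hind, integral_indicator_const _ hs, measureReal_def, hprob,
    smul_eq_mul, mul_one, ENNReal.toReal_ofReal hp]

lemma integrable_of_isIdempotentElem [IsFiniteMeasure μ] {Y : Ω → ℝ}
    (hY : AEStronglyMeasurable Y μ) (hidem : ∀ ω, IsIdempotentElem (Y ω)) : Integrable Y μ :=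
  .of_bound hY 1 <| ae_of_all _ fun ω => by
    rcases IsIdempotentElem.iff_eq_zero_or_one.mp (hidem ω) with h | h <;> simp [h]

variable {X : ι → Ω → ℝ}

lemma ProbabilityTheory.iIndepFun.integral_finset_prod_eq_pow (hX : iIndepFun X μ)
    (mX : ∀ i, AEStronglyMeasurable (X i) μ) (hp : ∀ i, ∫ ω, X i ω ∂μ = p) (S : Finset ι) :
    ∫ ω, ∏ i ∈ S, X i ω ∂μ = p ^ #S := by
  have hS : iIndepFun (fun i : S => X i) μ := hX.precomp Subtype.val_injective
  calc ∫ ω, ∏ i ∈ S, X i ω ∂μ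
      = ∫ ω, ∏ i : S, X i ω ∂μ := by
        congr 1; funext ω; exact (prod_coe_sort S _).symm
    _ = ∏ i : S, ∫ ω, X i ω ∂μ := hS.integral_fun_prod_eq_prod_integral fun i => mX i
    _ = p ^ #S := by simp [hp]

lemma ProbabilityTheory.iIndepFun.integral_mul_mul_eq_pow_card [DecidableEq ι]
    (hX : iIndepFun X μ) (mX : ∀ i, AEStronglyMeasurable (X i) μ)
    (hidem : ∀ i ω, IsIdempotentElem (X i ω))
    (hp : ∀ i, ∫ ω, X i ω ∂μ = p) (e f g : ι) :
    ∫ ω, X e ω * X f ω * X g ω ∂μ = p ^ #{e, f, g} := by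
  have hprod : ∀ ω, X e ω * X f ω * X g ω = ∏ i ∈ {e, f, g}, X i ω := fun ω => by
    rw [mul_assoc, ← prod_singleton (X · ω) g, mul_prod_eq_prod_insert (hidem · ω),
      mul_prod_eq_prod_insert (hidem · ω)]
  simp_rw [hprod]
  exact hX.integral_finset_prod_eq_pow mX hp _

lemma integral_sum_smul_pow_three_apply {V : Type*} [Fintype ι] [Fintype V] [DecidableEq V]
    (x : ι → Ω → ℝ) (M : ι → Matrix V V ℝ)
    (hx : ∀ e f g, Integrable (fun ω => x e ω * x f ω * x g ω) μ) (i j : V) :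
    ∫ ω, ((∑ e, x e ω • M e) ^ 3) i j ∂μ
      = (∑ e, ∑ f, ∑ g, (∫ ω, x e ω * x f ω * x g ω ∂μ) • (M e * M f * M g)) i j := by
  have hcube : ∀ ω, (∑ e, x e ω • M e) ^ 3
      = ∑ e, ∑ f, ∑ g, (x e ω * x f ω * x g ω) • (M e * M f * M g) := fun ω => by
    rw [pow_three', sum_mul_sum, sum_mul]
    simp only [sum_mul_sum, smul_mul_smul_comm]
  simp only [hcube, Matrix.sum_apply, Matrix.smul_apply, smul_eq_mul]
  rw [integral_finsetSum _ fun e _ => integrable_finsetSum _ fun f _ =>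
    integrable_finsetSum _ fun g _ => (hx e f g).mul_const _]
  refine sum_congr rfl fun e _ => ?_
  rw [integral_finsetSum _ fun f _ => integrable_finsetSum _ fun g _ => (hx e f g).mul_const _]
  refine sum_congr rfl fun f _ => ?_
  rw [integral_finsetSum _ fun g _ => (hx e f g).mul_const _]
  exact sum_congr rfl fun g _ => integral_mul_const _ _

end Moments

theorem stmt4_general (n : ℕ) (p : ℝ) (hp : p ∈ Set.Ioo (0 : ℝ) 1)
    {Ω : Type*} [MeasureSpace Ω] [IsProbabilityMeasure (ℙ : Measure Ω)]
    (A : Ω → Matrix (Fin n) (Fin n) ℝ)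
    (hmeas : ∀ i j, Measurable fun ω => A ω i j)
    (hsymm : ∀ ω i j, A ω i j = A ω j i)
    (h01 : ∀ ω i j, A ω i j = 0 ∨ A ω i j = 1)
    (hbern : ∀ i j, i ≠ j → (ℙ : Measure Ω) {ω | A ω i j = 1} = ENNReal.ofReal p)
    (hindep : iIndepFun
      (fun (e : {e : Fin n × Fin n // e.1 < e.2}) ω => A ω e.1.1 e.1.2) ℙ)
    (L : Ω → Matrix (Fin n) (Fin n) ℝ)
    (hL : ∀ ω, L ω = Matrix.diagonal (fun i => ∑ j, A ω i j) - A ω) :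
    ∀ i j, ∫ ω, (L ω ^ 3) i j =
      ((((n : ℝ) - 2) * ((n : ℝ) - 4) * p ^ 3 + 6 * ((n : ℝ) - 2) * p ^ 2 + 4 * p) •
        ((n : ℝ) • (1 : Matrix (Fin n) (Fin n) ℝ) - Matrix.of fun _ _ => (1 : ℝ))
        : Matrix (Fin n) (Fin n) ℝ) i j := by
  intro i j
  set X : {e : Fin n × Fin n // e.1 < e.2} → Ω → ℝ := fun e ω => A ω e.1.1 e.1.2
  have mX : ∀ e, AEStronglyMeasurable (X e) ℙ := fun e => (hmeas _ _).aestronglyMeasurable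
  have hidem : ∀ e ω, IsIdempotentElem (X e ω) := fun e ω =>
    IsIdempotentElem.iff_eq_zero_or_one.mpr (h01 ω _ _)
  have hmean : ∀ e, ∫ ω, X e ω = p := fun e =>
    integral_eq_of_zero_or_one (hmeas _ _) (h01 · _ _) hp.1.le (hbern _ _ e.2.ne)
  have hint : ∀ e f g, Integrable (fun ω => X e ω * X f ω * X g ω) ℙ := fun e f g =>
    integrable_of_isIdempotentElem (((mX e).mul (mX f)).mul (mX g))
      fun ω => ((hidem e ω).mul (hidem f ω)).mul (hidem g ω)
  have hLX : ∀ ω, L ω = ∑ e, X e ω • edgeLaplacian e.1.1 e.1.2 := fun ω => by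
    rw [hL, diagonal_sub_eq_sum_smul_edgeLaplacian _ (hsymm ω)]
  simp_rw [hLX, integral_sum_smul_pow_three_apply X _ hint,
    hindep.integral_mul_mul_eq_pow_card mX hidem hmean, sum_pow_card_smul_edgeLaplacian_mul,
    Fintype.card_fin]

/-- Third matrix moment of the Erdős–Rényi Laplacian: `𝔼[L³] = ((n-2)(n-4)p³ + 6(n-2)p² + 4p)(n I - J)`. -/
theorem stmt4 (n : ℕ) (p : ℝ) (hp : p ∈ Set.Ioo (0 : ℝ) 1)
    {Ω : Type*} [MeasureSpace Ω] [IsProbabilityMeasure (ℙ : Measure Ω)]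
    (A : Ω → Matrix (Fin n) (Fin n) ℝ)
    (hmeas : ∀ i j, Measurable fun ω => A ω i j)
    (hsymm : ∀ ω i j, A ω i j = A ω j i)
    (hdiag : ∀ ω i, A ω i i = 0)
    (h01 : ∀ ω i j, A ω i j = 0 ∨ A ω i j = 1)
    (hbern : ∀ i j, i ≠ j → (ℙ : Measure Ω) {ω | A ω i j = 1} = ENNReal.ofReal p)
    (hindep : iIndepFun
      (fun (e : {e : Fin n × Fin n // e.1 < e.2}) ω => A ω e.1.1 e.1.2) ℙ)
    (L : Ω → Matrix (Fin n) (Fin n) ℝ)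
    (hL : ∀ ω, L ω = Matrix.diagonal (fun i => ∑ j, A ω i j) - A ω) :
    ∀ i j, ∫ ω, (L ω ^ 3) i j =
      ((((n : ℝ) - 2) * ((n : ℝ) - 4) * p ^ 3 + 6 * ((n : ℝ) - 2) * p ^ 2 + 4 * p) •
        ((n : ℝ) • (1 : Matrix (Fin n) (Fin n) ℝ) - Matrix.of fun _ _ => (1 : ℝ))
        : Matrix (Fin n) (Fin n) ℝ) i j :=
  stmt4_general n p hp A hmeas hsymm h01 hbern hindep L hL
end

section
/- Let X_1, ..., X_m be (possibly dependent) random variables with common mean μ and common variance σ². Then the k-th order statistic X_{k:m} (the k-th smallest value) satisfies μ - σ√((m-k)/k) ≤ 𝔼[X_{k:m}] ≤ μ + σ√((k-1)/(m-k+1)). -/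
/-!
Fix a threshold `t`. If `Y` is the `(j+1)`-th smallest of `X 0, …, X (m-1)`, at least `m - j`
of the `X i` are `≥ Y`, so `(m - j) (Y - t) ≤ ∑ i, (X i - t)⁺`. Taking expectations and using
`𝔼 Z⁺ = (𝔼 Z + 𝔼 |Z|) / 2 ≤ (𝔼 Z + √(𝔼 Z²)) / 2` gives
`(m - j) (𝔼 Y - t) ≤ m (μ - t + √(σ² + (μ - t)²)) / 2`, and the threshold
`t = μ + σ (r² - 1) / (2r)` with `r = √(j / (m - j))` turns this into `𝔼 Y ≤ μ + σ r`.
The lower bound is the upper bound for `-X`, whose order statistics are those of `X` reversed.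
-/

open MeasureTheory ProbabilityTheory Finset

section Moments

variable {Ω : Type*} [MeasurableSpace Ω] {P : Measure Ω} [IsProbabilityMeasure P] {Z : Ω → ℝ}

lemma integral_sub_const_of_integrable (hZ : Integrable Z P) (t : ℝ) :
    ∫ ω, (Z ω - t) ∂P = ∫ ω, Z ω ∂P - t := by
  simp [integral_sub hZ (integrable_const t)]

lemma sq_integral_le_integral_sq (hZ : MemLp Z 2 P) : (∫ ω, Z ω ∂P) ^ 2 ≤ ∫ ω, Z ω ^ 2 ∂P := by
  have := variance_nonneg Z P
  rw [variance_eq_sub hZ] at this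
  simpa using this

lemma integral_abs_le_sqrt_integral_sq (hZ : MemLp Z 2 P) :
    ∫ ω, |Z ω| ∂P ≤ √(∫ ω, Z ω ^ 2 ∂P) := by
  have habs : MemLp (fun ω => |Z ω|) 2 P := by simpa [Real.norm_eq_abs] using hZ.norm
  rw [← Real.sqrt_sq (integral_nonneg fun ω => abs_nonneg (Z ω))]
  exact Real.sqrt_le_sqrt (by simpa using sq_integral_le_integral_sq habs)

lemma integral_max_zero_le (hZ : MemLp Z 2 P) :
    ∫ ω, max (Z ω) 0 ∂P ≤ (∫ ω, Z ω ∂P + √(∫ ω, Z ω ^ 2 ∂P)) / 2 := by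
  have hZ1 : Integrable Z P := hZ.integrable one_le_two
  have hmax : ∀ ω, max (Z ω) 0 = (Z ω + |Z ω|) / 2 := fun ω => by
    rcases le_total 0 (Z ω) with h | h
    · rw [abs_of_nonneg h, max_eq_left h]; ring
    · rw [abs_of_nonpos h, max_eq_right h]; ring
  simp_rw [hmax]
  rw [integral_div, integral_add hZ1 hZ1.abs]
  linarith [integral_abs_le_sqrt_integral_sq hZ]

lemma integral_sub_const_sq (hZ : MemLp Z 2 P) (t : ℝ) :
    ∫ ω, (Z ω - t) ^ 2 ∂P = Var[Z; P] + (∫ ω, Z ω ∂P - t) ^ 2 := by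
  have hZt : MemLp (fun ω => Z ω - t) 2 P := hZ.sub (memLp_const t)
  rw [← variance_sub_const hZ.aestronglyMeasurable t, variance_eq_sub hZt,
    ← integral_sub_const_of_integrable (hZ.integrable one_le_two)]
  simp

end Moments

lemma card_mul_sub_le_sum_max_sub {ι : Type*} [Fintype ι] {x : ι → ℝ} {y : ℝ} (s : Finset ι)
    (hs : ∀ i ∈ s, y ≤ x i) (t : ℝ) : #s * (y - t) ≤ ∑ i, max (x i - t) 0 :=
  calc #s * (y - t) = ∑ i ∈ s, (y - t) := by rw [sum_const, nsmul_eq_mul]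
    _ ≤ ∑ i ∈ s, max (x i - t) 0 :=
      sum_le_sum fun i hi => (sub_le_sub_right (hs i hi) t).trans (le_max_left _ _)
    _ ≤ ∑ i, max (x i - t) 0 :=
      sum_le_sum_of_subset_of_nonneg (subset_univ s) fun _ _ _ => le_max_right _ _

-- `y` is the `(j+1)`-th smallest of the `x i`: indices in `Fin m` start at `0`.
def IsOrderStat {m : ℕ} (x : Fin m → ℝ) (j : Fin m) (y : ℝ) : Prop :=
  ∃ e : Equiv.Perm (Fin m), Monotone (x ∘ e) ∧ y = x (e j)

namespace IsOrderStat

variable {m : ℕ} {x : Fin m → ℝ} {j : Fin m} {y : ℝ}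

lemma neg (h : IsOrderStat x j y) : IsOrderStat (-x) j.rev (-y) := by
  obtain ⟨e, hmono, rfl⟩ := h
  refine ⟨Fin.revPerm.trans e, fun a b hab => ?_, by simp⟩
  simpa using hmono (Fin.rev_le_rev.mpr hab)

lemma le_of_val_eq_zero (h : IsOrderStat x j y) (hj : (j : ℕ) = 0) (i : Fin m) : y ≤ x i := by
  obtain ⟨e, hmono, rfl⟩ := h
  simpa using hmono (show j ≤ e.symm i from Fin.le_def.mpr (by omega))

lemma mul_sub_le_sum_max_sub (h : IsOrderStat x j y) (t : ℝ) :
    ((m : ℝ) - j) * (y - t) ≤ ∑ i, max (x i - t) 0 := by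
  obtain ⟨e, hmono, rfl⟩ := h
  have hcard : #((Ici j).map e.toEmbedding) = (m : ℝ) - j := by
    rw [card_map, Fin.card_Ici, Nat.cast_sub j.is_lt.le]
  rw [← hcard]
  refine card_mul_sub_le_sum_max_sub _ (fun i hi => ?_) t
  obtain ⟨a, ha, rfl⟩ := mem_map.mp hi
  exact hmono (mem_Ici.mp ha)

end IsOrderStat

section OrderStatistics

variable {Ω : Type*} [MeasurableSpace Ω] {P : Measure Ω} [IsProbabilityMeasure P]
  {m : ℕ} {X : Fin m → Ω → ℝ} {Y : Ω → ℝ} {j : Fin m} {μ σ : ℝ}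

lemma mul_integral_sub_le_of_isOrderStat (hL2 : ∀ i, MemLp (X i) 2 P)
    (hmean : ∀ i, ∫ ω, X i ω ∂P = μ) (hvar : ∀ i, ∫ ω, (X i ω - μ) ^ 2 ∂P = σ ^ 2)
    (hYint : Integrable Y P) (hY : ∀ ω, IsOrderStat (fun i => X i ω) j (Y ω)) (t : ℝ) :
    ((m : ℝ) - j) * (∫ ω, Y ω ∂P - t) ≤ m * ((μ - t + √(σ ^ 2 + (μ - t) ^ 2)) / 2) := by
  have hmax_int : ∀ i, Integrable (fun ω => max (X i ω - t) 0) P := fun i =>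
    (((hL2 i).integrable one_le_two).sub (integrable_const t)).pos_part
  have hmax_le : ∀ i, ∫ ω, max (X i ω - t) 0 ∂P ≤ (μ - t + √(σ ^ 2 + (μ - t) ^ 2)) / 2 := by
    intro i
    have hvar' : Var[X i; P] = σ ^ 2 := by
      simpa [hmean i, hvar i] using (integral_sub_const_sq (hL2 i) μ).symm
    have := integral_max_zero_le (Z := fun ω => X i ω - t) ((hL2 i).sub (memLp_const t))
    rwa [integral_sub_const_of_integrable ((hL2 i).integrable one_le_two),
      integral_sub_const_sq (hL2 i), hvar', hmean i] at this
  calc ((m : ℝ) - j) * (∫ ω, Y ω ∂P - t) = ∫ ω, ((m : ℝ) - j) * (Y ω - t) ∂P := by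
        rw [integral_const_mul, integral_sub_const_of_integrable hYint]
    _ ≤ ∫ ω, ∑ i, max (X i ω - t) 0 ∂P :=
        integral_mono ((hYint.sub (integrable_const t)).const_mul _)
          (integrable_finsetSum _ fun i _ => hmax_int i)
          fun ω => (hY ω).mul_sub_le_sum_max_sub t
    _ = ∑ i, ∫ ω, max (X i ω - t) 0 ∂P := integral_finsetSum _ fun i _ => hmax_int i
    _ ≤ ∑ _i : Fin m, (μ - t + √(σ ^ 2 + (μ - t) ^ 2)) / 2 := sum_le_sum fun i _ => hmax_le i
    _ = m * ((μ - t + √(σ ^ 2 + (μ - t) ^ 2)) / 2) := by simp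

lemma integral_le_of_isOrderStat (hσ : 0 ≤ σ) (hL2 : ∀ i, MemLp (X i) 2 P)
    (hmean : ∀ i, ∫ ω, X i ω ∂P = μ) (hvar : ∀ i, ∫ ω, (X i ω - μ) ^ 2 ∂P = σ ^ 2)
    (hYint : Integrable Y P) (hY : ∀ ω, IsOrderStat (fun i => X i ω) j (Y ω)) :
    ∫ ω, Y ω ∂P ≤ μ + σ * √((j : ℝ) / (m - j)) := by
  rcases Nat.eq_zero_or_pos j with hj | hj
  · have := integral_mono hYint ((hL2 j).integrable one_le_two)
      fun ω => (hY ω).le_of_val_eq_zero hj j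
    simpa [hj, hmean] using this
  set R : ℝ := (m : ℝ) - j
  have hR : 0 < R := sub_pos.mpr (by exact_mod_cast j.is_lt)
  set r := √((j : ℝ) / R)
  have hr : 0 < r := Real.sqrt_pos.mpr (div_pos (by exact_mod_cast hj) hR)
  have hr2 : r ^ 2 = j / R := Real.sq_sqrt (div_pos (by exact_mod_cast hj) hR).le
  have hm : (m : ℝ) = R * (1 + r ^ 2) := by rw [hr2]; field_simp; ring
  set t := μ + σ * (r ^ 2 - 1) / (2 * r) with ht
  have hgap : μ - t + √(σ ^ 2 + (μ - t) ^ 2) = σ / r := by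
    rw [show σ ^ 2 + (μ - t) ^ 2 = (σ * (r ^ 2 + 1) / (2 * r)) ^ 2 by rw [ht]; field_simp; ring,
      Real.sqrt_sq (by positivity), ht]
    field_simp
    ring
  have key := mul_integral_sub_le_of_isOrderStat hL2 hmean hvar hYint hY t
  rw [hgap] at key
  have hYt : ∫ ω, Y ω ∂P - t ≤ (1 + r ^ 2) * (σ / r / 2) := by
    refine le_of_mul_le_mul_left ?_ hR
    calc R * (∫ ω, Y ω ∂P - t) ≤ m * (σ / r / 2) := key
      _ = R * ((1 + r ^ 2) * (σ / r / 2)) := by rw [hm]; ring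
  have hbound : t + (1 + r ^ 2) * (σ / r / 2) = μ + σ * r := by
    rw [ht]; field_simp; ring
  linarith

end OrderStatistics

/-- If `X 0, …, X (m-1)` are jointly distributed random variables with common mean `μ` and
common variance `σ²`, then the `k`-th order statistic `Y` (the `k`-th smallest value)
satisfies `μ - σ √((m-k)/k) ≤ 𝔼[Y] ≤ μ + σ √((k-1)/(m-k+1))`. -/
theorem stmt10 (m k : ℕ) (hk : 1 ≤ k) (hkm : k ≤ m) (μm σ : ℝ) (hσ : 0 ≤ σ)
    {Ω : Type*} [MeasureSpace Ω] [IsProbabilityMeasure (ℙ : Measure Ω)]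
    (X : Fin m → Ω → ℝ)
    (hL2 : ∀ i, MemLp (X i) 2 (ℙ : Measure Ω))
    (hmean : ∀ i, ∫ ω, X i ω = μm)
    (hvar : ∀ i, ∫ ω, (X i ω - μm) ^ 2 = σ ^ 2)
    (Y : Ω → ℝ)
    (hYint : Integrable Y (ℙ : Measure Ω))
    -- `Y ω` is the `k`-th smallest among `X 0 ω, …, X (m-1) ω`
    (hY : ∀ ω, ∃ e : Equiv.Perm (Fin m), Monotone (fun i => X (e i) ω) ∧
      Y ω = X (e ⟨k - 1, by omega⟩) ω) :
    μm - σ * Real.sqrt (((m : ℝ) - k) / k) ≤ ∫ ω, Y ω ∧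
    ∫ ω, Y ω ≤ μm + σ * Real.sqrt (((k : ℝ) - 1) / ((m : ℝ) - k + 1)) := by
  set j : Fin m := ⟨k - 1, by omega⟩
  have hj : ((j : ℕ) : ℝ) = k - 1 := by simp [j, Nat.cast_sub hk]
  have hj_rev : ((j.rev : ℕ) : ℝ) = m - k := by
    simp [j, Fin.val_rev, Nat.sub_add_cancel hk, Nat.cast_sub hkm]
  have hY' : ∀ ω, IsOrderStat (fun i => X i ω) j (Y ω) := hY
  constructor
  · have h := integral_le_of_isOrderStat (X := fun i ω => -X i ω) (Y := fun ω => -Y ω)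
      (μ := -μm) hσ (fun i => (hL2 i).neg) (fun i => by rw [integral_neg, hmean i])
      (fun i => by rw [← hvar i]; congr 1; ext ω; ring) hYint.neg (fun ω => (hY' ω).neg)
    rw [integral_neg, hj_rev, sub_sub_cancel] at h
    linarith
  · have h := integral_le_of_isOrderStat hσ hL2 hmean hvar hYint hY'
    rwa [hj, ← sub_add] at h
end

section
/- Fix p ∈ (0,1) and set q = 1 - p. As n → ∞, the quantity N_min(n) = (1/log q)·log((4n² + 4n·cos(π/n) - τ(n) - 8n)/(6n² - 8n)), where τ(n) = √(16n²(n-2)(1-cos(π/n)) + 32n(2-n)(1-cos(π/n))² + 4n²(n-2)²), converges to -log 3 / log q. -/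
open Real Filter

noncomputable def gAux (u : ℝ) : ℝ :=
  (4 + 4 * u * Real.cos (Real.pi * u) -
      Real.sqrt
        (16 * (u - 2 * u ^ 2) * (1 - Real.cos (Real.pi * u)) +
          32 * (2 * u ^ 3 - u ^ 2) * (1 - Real.cos (Real.pi * u)) ^ 2 +
          4 * (1 - 2 * u) ^ 2) -
    8 * u) / (6 - 8 * u)

lemma gAux_contAt : ContinuousAt gAux 0 := by
  unfold gAux
  apply ContinuousAt.div
  · fun_prop
  · fun_prop
  · norm_num

lemma gAux_zero : gAux 0 = 1 / 3 := by
  have h4 : Real.sqrt 4 = 2 := by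
    rw [show (4 : ℝ) = 2 ^ 2 by norm_num, Real.sqrt_sq (by norm_num)]
  simp [gAux]
  norm_num [h4]

lemma key (n : ℕ) (hn : 2 ≤ n) :
    (4 * (n : ℝ) ^ 2 + 4 * (n : ℝ) * Real.cos (Real.pi / n) -
        Real.sqrt
          (16 * (n : ℝ) ^ 2 * ((n : ℝ) - 2) * (1 - Real.cos (Real.pi / n)) +
            32 * (n : ℝ) * (2 - (n : ℝ)) * (1 - Real.cos (Real.pi / n)) ^ 2 +
            4 * (n : ℝ) ^ 2 * ((n : ℝ) - 2) ^ 2) -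
        8 * (n : ℝ)) / (6 * (n : ℝ) ^ 2 - 8 * (n : ℝ)) = gAux (1 / n) := by
  have hm : (0 : ℝ) < n := by
    have : (2 : ℝ) ≤ n := by exact_mod_cast hn
    linarith
  have hm' : (n : ℝ) ≠ 0 := hm.ne'
  have hpi : Real.pi / (n : ℝ) = Real.pi * (1 / n) := by ring
  rw [gAux, hpi]
  set c := Real.cos (Real.pi * (1 / (n : ℝ))) with hc
  set m := (n : ℝ)
  have hA : 16 * m ^ 2 * (m - 2) * (1 - c) + 32 * m * (2 - m) * (1 - c) ^ 2 +
      4 * m ^ 2 * (m - 2) ^ 2 =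
      (16 * ((1 / m) - 2 * (1 / m) ^ 2) * (1 - c) +
        32 * (2 * (1 / m) ^ 3 - (1 / m) ^ 2) * (1 - c) ^ 2 +
        4 * (1 - 2 * (1 / m)) ^ 2) * (m ^ 2) ^ 2 := by
    field_simp
  rw [hA, Real.sqrt_mul' _ (sq_nonneg (m ^ 2)), Real.sqrt_sq (sq_nonneg m)]
  have hnum : 4 * m ^ 2 + 4 * m * c -
      Real.sqrt (16 * ((1 / m) - 2 * (1 / m) ^ 2) * (1 - c) +
        32 * (2 * (1 / m) ^ 3 - (1 / m) ^ 2) * (1 - c) ^ 2 +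
        4 * (1 - 2 * (1 / m)) ^ 2) * m ^ 2 - 8 * m =
      (4 + 4 * (1 / m) * c -
        Real.sqrt (16 * ((1 / m) - 2 * (1 / m) ^ 2) * (1 - c) +
          32 * (2 * (1 / m) ^ 3 - (1 / m) ^ 2) * (1 - c) ^ 2 +
          4 * (1 - 2 * (1 / m)) ^ 2) - 8 * (1 / m)) * m ^ 2 := by
    field_simp
  have hden : 6 * m ^ 2 - 8 * m = (6 - 8 * (1 / m)) * m ^ 2 := by
    field_simp
  rw [hnum, hden, mul_div_mul_right _ _ (pow_ne_zero 2 hm')]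

/-- For fixed `p ∈ (0,1)` with `q = 1 - p`, the bound
`N_min(n) = (1/log q) · log((4n² + 4n cos(π/n) - τ(n) - 8n)/(6n² - 8n))`, where
`τ(n) = √(16n²(n-2)(1-cos(π/n)) + 32n(2-n)(1-cos(π/n))² + 4n²(n-2)²)`, converges to
`-log 3 / log q` as `n → ∞`. -/
theorem stmt17 (p : ℝ) (hp : p ∈ Set.Ioo (0 : ℝ) 1) (q : ℝ) (hq : q = 1 - p) :
    Tendsto
      (fun n : ℕ =>
        (1 / Real.log q) *
          Real.log
            ((4 * (n : ℝ) ^ 2 + 4 * (n : ℝ) * Real.cos (Real.pi / n) -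
                Real.sqrt
                  (16 * (n : ℝ) ^ 2 * ((n : ℝ) - 2) * (1 - Real.cos (Real.pi / n)) +
                    32 * (n : ℝ) * (2 - (n : ℝ)) * (1 - Real.cos (Real.pi / n)) ^ 2 +
                    4 * (n : ℝ) ^ 2 * ((n : ℝ) - 2) ^ 2) -
                8 * (n : ℝ)) /
              (6 * (n : ℝ) ^ 2 - 8 * (n : ℝ))))
      atTop (nhds (-Real.log 3 / Real.log q)) := by
  have hg : Tendsto (fun n : ℕ => gAux (1 / n)) atTop (nhds (1 / 3)) := by
    have := gAux_contAt.tendsto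
    rw [gAux_zero] at this
    exact this.comp tendsto_one_div_atTop_nhds_zero_nat
  have hlog : Tendsto (fun n : ℕ => (1 / Real.log q) * Real.log (gAux (1 / n)))
      atTop (nhds ((1 / Real.log q) * Real.log (1 / 3))) := by
    exact (((Real.continuousAt_log (by norm_num)).tendsto.comp hg).const_mul _)
  have hval : (1 / Real.log q) * Real.log (1 / 3) = -Real.log 3 / Real.log q := by
    rw [Real.log_div one_ne_zero (by norm_num), Real.log_one]
    ring
  rw [hval] at hlog
  apply hlog.congr'
  filter_upwards [eventually_ge_atTop 2] with n hn
  rw [key n hn]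
end
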